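/- arXiv:1509.03017 — 7 statements merged into one kernel-verified Lean document; each statement's English description precedes it below -/
import Mathlib

section
/- The transpose of the Kripke box, τ_X : Pow(X) → M(X) given by τ_X(U) = { V ⊆ X | U ⊆ V }, is a morphism of monads from the powerset monad to the monotone neighbourhood monad M. -/
/-- A family of subsets of `X` is upward closed under `⊆`. -/
def UpClosed {X : Type} (N : Set (Set X)) : Prop :=
  ∀ U V : Set X, U ∈ N → U ⊆ V → V ∈ N

/-- The monotone neighbourhood monad (on objects): upward-closed families of subsets. -/
def MNbhd (X : Type) : Type := {N : Set (Set X) // UpClosed N}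

/-- Functorial action of the monotone neighbourhood monad. -/
def Mmap {X Y : Type} (f : X → Y) (N : MNbhd X) : MNbhd Y :=
  ⟨{U : Set Y | f ⁻¹' U ∈ N.1}, fun U V hU hUV => N.2 _ _ hU (fun x hx => hUV hx)⟩

/-- Unit of the monotone neighbourhood monad. -/
def Munit {X : Type} (x : X) : MNbhd X :=
  ⟨{U : Set X | x ∈ U}, fun _ _ hU hUV => hUV hU⟩

/-- Multiplication of the monotone neighbourhood monad. -/
def Mmult {X : Type} (𝒩 : MNbhd (MNbhd X)) : MNbhd X :=
  ⟨{U : Set X | {N : MNbhd X | U ∈ N.1} ∈ 𝒩.1},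
    fun U V hU hUV => 𝒩.2 _ _ hU (fun N hN => N.2 U V hN hUV)⟩

/-- The transpose of the Kripke box. -/
def tauBox {X : Type} (U : Set X) : MNbhd X :=
  ⟨{V : Set X | U ⊆ V}, fun _ _ hA hAB => hA.trans hAB⟩

/-- the transpose of the Kripke box, `τ_X(U) = {V ⊆ X | U ⊆ V}`, is a
morphism of monads from the powerset monad (unit `x ↦ {x}`, multiplication `⋃₀`)
to the monotone neighbourhood monad: it is natural and commutes with units and
multiplications. -/
theorem stmt2 :
    (∀ (X Y : Type) (f : X → Y) (U : Set X), Mmap f (tauBox U) = tauBox (f '' U)) ∧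
    (∀ (X : Type) (x : X), tauBox ({x} : Set X) = Munit x) ∧
    (∀ (X : Type) (S : Set (Set X)),
      tauBox (⋃₀ S) = Mmult (Mmap (fun s : Set X => tauBox s) (tauBox S))) := by
  refine ⟨?_, ?_, ?_⟩
  · intro X Y f U
    apply Subtype.ext
    ext V
    simp only [Mmap, tauBox, Set.mem_setOf_eq, Set.image_subset_iff]
  · intro X x
    apply Subtype.ext
    ext U
    simp [tauBox, Munit]
  · intro X S
    apply Subtype.ext
    ext U
    simp only [Mmult, Mmap, tauBox, Set.mem_setOf_eq, Set.sUnion_subset_iff]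
    constructor
    · intro h s hs
      exact h s hs
    · intro h s hs
      exact h hs
end

section
/- The transpose of the Kripke diamond, τ_X : Pow(X) → M(X) given by τ_X(U) = { V ⊆ X | U ∩ V ≠ ∅ }, is a morphism of monads from the powerset monad to the monotone neighbourhood monad M. -/
/-- The transpose of the Kripke diamond. -/
def tauDia {X : Type} (U : Set X) : MNbhd X :=
  ⟨{V : Set X | (U ∩ V).Nonempty}, fun A B hA hAB =>
    hA.imp (fun x hx => ⟨hx.1, hAB hx.2⟩)⟩

/-- the transpose of the Kripke diamond, `τ_X(U) = {V ⊆ X | U ∩ V ≠ ∅}`,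
is a morphism of monads from the powerset monad (unit `x ↦ {x}`, multiplication `⋃₀`)
to the monotone neighbourhood monad: it is natural and commutes with units and
multiplications. -/
theorem stmt3 :
    (∀ (X Y : Type) (f : X → Y) (U : Set X), Mmap f (tauDia U) = tauDia (f '' U)) ∧
    (∀ (X : Type) (x : X), tauDia ({x} : Set X) = Munit x) ∧
    (∀ (X : Type) (S : Set (Set X)),
      tauDia (⋃₀ S) = Mmult (Mmap (fun s : Set X => tauDia s) (tauDia S))) := by
  refine ⟨?_, ?_, ?_⟩
  · intro X Y f U
    apply Subtype.ext
    ext V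
    constructor
    · rintro ⟨x, hxU, hxV⟩
      exact ⟨f x, ⟨x, hxU, rfl⟩, hxV⟩
    · rintro ⟨y, ⟨x, hxU, rfl⟩, hyV⟩
      exact ⟨x, hxU, hyV⟩
  · intro X x
    apply Subtype.ext
    ext V
    constructor
    · rintro ⟨y, rfl, hyV⟩
      exact hyV
    · exact fun h => ⟨x, rfl, h⟩
  · intro X S
    apply Subtype.ext
    ext V
    constructor
    · rintro ⟨x, ⟨s, hsS, hxs⟩, hxV⟩
      exact ⟨s, hsS, x, hxs, hxV⟩
    · rintro ⟨s, hsS, x, hxs, hxV⟩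
      exact ⟨x, ⟨s, hsS, hxs⟩, hxV⟩
end

section
/- Let λ be a predicate lifting for a monad T whose transpose λ̂ : T ⇒ N into the neighbourhood monad is a monad morphism. Then for all f, g : X → TX, all x ∈ X and all U ⊆ X: (f ∘_Kl g)(x) ∈ λ_X(U) if and only if f(x) ∈ λ_X(g⁻¹(λ_X(U))). -/
/-- A monad on `Set` (the category of types), given by object map, functorial
action, unit and multiplication, satisfying the usual laws. -/
structure SetMonad where
  obj : Type → Type
  map : {X Y : Type} → (X → Y) → obj X → obj Y
  unit : {X : Type} → X → obj X
  mult : {X : Type} → obj (obj X) → obj X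
  map_id : ∀ {X : Type} (t : obj X), map id t = t
  map_comp : ∀ {X Y Z : Type} (f : X → Y) (g : Y → Z) (t : obj X),
    map (g ∘ f) t = map g (map f t)
  unit_nat : ∀ {X Y : Type} (f : X → Y) (x : X), map f (unit x) = unit (f x)
  mult_nat : ∀ {X Y : Type} (f : X → Y) (t : obj (obj X)),
    map f (mult t) = mult (map (map f) t)
  mult_unit : ∀ {X : Type} (t : obj X), mult (unit t) = t
  mult_map_unit : ∀ {X : Type} (t : obj X), mult (map unit t) = t
  mult_assoc : ∀ {X : Type} (t : obj (obj (obj X))),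
    mult (mult t) = mult (map mult t)

/-- A morphism of monads on `Set`. -/
structure MonadMor (M N : SetMonad) where
  app : {X : Type} → M.obj X → N.obj X
  nat : ∀ {X Y : Type} (f : X → Y) (t : M.obj X), N.map f (app t) = app (M.map f t)
  unit : ∀ {X : Type} (x : X), app (M.unit x) = N.unit x
  mult : ∀ {X : Type} (t : M.obj (M.obj X)),
    app (M.mult t) = N.mult (N.map (fun s => app s) (app t))

/-- The covariant powerset monad. -/
def PowM : SetMonad where
  obj := Set
  map f := Set.image f
  unit x := {x}
  mult := Set.sUnion
  map_id := by intro X t; simp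
  map_comp := by intro X Y Z f g t; exact Set.image_comp g f t
  unit_nat := by intro X Y f x; simp
  mult_nat := by intro X Y f t; ext y; simp [Set.mem_sUnion]; tauto
  mult_unit := by intro X t; simp
  mult_map_unit := by intro X t; ext x; simp
  mult_assoc := by intro X t; ext x; simp [Set.mem_sUnion]; tauto

/-- Kleisli composition. -/
def kcomp (T : SetMonad) {X : Type} (f g : X → T.obj X) : X → T.obj X :=
  fun x => T.mult (T.map g (f x))

/-- Kleisli iteration. -/
def kiter (T : SetMonad) {X : Type} (f : X → T.obj X) : ℕ → X → T.obj X
  | 0 => fun x => T.unit x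
  | n + 1 => kcomp T f (kiter T f n)

/-- Kleisli star: pointwise join of all Kleisli iterates. -/
noncomputable def kstar (T : SetMonad) [inst : ∀ X : Type, CompleteLattice (T.obj X)]
    {X : Type} (f : X → T.obj X) : X → T.obj X :=
  fun x => ⨆ n : ℕ, kiter T f n x

/-- if the transpose `λ̂ : T ⇒ N` of a predicate lifting `λ` is a
monad morphism into the neighbourhood monad (expressed below by naturality of `λ`
and the unit and multiplication laws of the transpose, unfolded), then for all
`f, g : X → TX`, `x ∈ X`, `U ⊆ X`:
`(f ∘_Kl g)(x) ∈ λ_X(U)` iff `f(x) ∈ λ_X(g⁻¹(λ_X(U)))`. -/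
theorem stmt7 (T : SetMonad)
    (lam : {X : Type} → Set X → Set (T.obj X))
    (lam_nat : ∀ {X Y : Type} (f : X → Y) (U : Set Y),
      lam (f ⁻¹' U) = (T.map f) ⁻¹' lam U)
    (lam_unit : ∀ {X : Type} (x : X) (U : Set X), T.unit x ∈ lam U ↔ x ∈ U)
    (lam_mult : ∀ {X : Type} (t : T.obj (T.obj X)) (U : Set X),
      T.mult t ∈ lam U ↔ t ∈ lam (lam U))
    {X : Type} (f g : X → T.obj X) (x : X) (U : Set X) :
    kcomp T f g x ∈ lam U ↔ f x ∈ lam (g ⁻¹' lam U) := by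
  rw [kcomp, lam_mult, lam_nat g (lam U)]
  rfl
end

section
/- Soundness of the star axiom: let T be a left-quantalic monad and λ a diamond-like predicate lifting whose transpose is a monad morphism T ⇒ N. Then for every f : X → TX and U ⊆ X: { x | f*(x) ∈ λ_X(U) } = U ∪ { x | f(x) ∈ λ_X({ y | f*(y) ∈ λ_X(U) }) }. -/
/-- A predicate lifting `λ` is diamond-like: joins in `λ_X(U)` are witnessed by
some component. -/
def DiamondLike (T : SetMonad) [∀ X : Type, CompleteLattice (T.obj X)]
    (lam : {X : Type} → Set X → Set (T.obj X)) : Prop :=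
  ∀ {X I : Type} (U : Set X) (t : I → T.obj X),
    (⨆ i, t i) ∈ lam U ↔ ∃ i, t i ∈ lam U

/-- A predicate lifting `λ` is box-like: joins lie in `λ_X(U)` iff all components do. -/
def BoxLike (T : SetMonad) [∀ X : Type, CompleteLattice (T.obj X)]
    (lam : {X : Type} → Set X → Set (T.obj X)) : Prop :=
  ∀ {X I : Type} (U : Set X) (t : I → T.obj X),
    (⨆ i, t i) ∈ lam U ↔ ∀ i, t i ∈ lam U

/-- Left-quantalic: Kleisli composition left-distributes over pointwise joins of
Kleisli arrows. -/
def LeftQuantalic (T : SetMonad) [∀ X : Type, CompleteLattice (T.obj X)] : Prop :=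
  ∀ {X I : Type} (f : X → T.obj X) (g : I → X → T.obj X) (x : X),
    kcomp T f (fun y => ⨆ i, g i y) x = ⨆ i, kcomp T f (g i) x

/-- soundness of the star axiom. For a left-quantalic monad `T` and
a diamond-like predicate lifting `λ` whose transpose is a monad morphism `T ⇒ N`
(expressed by naturality of `λ` and the unfolded unit/multiplication laws), for
every `f : X → TX` and `U ⊆ X`:
`{x | f*(x) ∈ λ_X(U)} = U ∪ {x | f(x) ∈ λ_X({y | f*(y) ∈ λ_X(U)})}`. -/
theorem stmt11 (T : SetMonad) [∀ X : Type, CompleteLattice (T.obj X)]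
    (hq : LeftQuantalic T)
    (lam : {X : Type} → Set X → Set (T.obj X))
    (hdia : DiamondLike T lam)
    (lam_nat : ∀ {X Y : Type} (f : X → Y) (U : Set Y),
      lam (f ⁻¹' U) = (T.map f) ⁻¹' lam U)
    (lam_unit : ∀ {X : Type} (x : X) (U : Set X), T.unit x ∈ lam U ↔ x ∈ U)
    (lam_mult : ∀ {X : Type} (t : T.obj (T.obj X)) (U : Set X),
      T.mult t ∈ lam U ↔ t ∈ lam (lam U))
    {X : Type} (f : X → T.obj X) (U : Set X) :
    {x : X | kstar T f x ∈ lam U}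
      = U ∪ {x : X | f x ∈ lam {y : X | kstar T f y ∈ lam U}} := by
  have hcomp : ∀ (g h : X → T.obj X) (V : Set X) (x : X),
      kcomp T g h x ∈ lam V ↔ g x ∈ lam {y | h y ∈ lam V} := by
    intro g h V x
    have e : {y | h y ∈ lam V} = h ⁻¹' lam V := rfl
    rw [kcomp, lam_mult, e, ← Set.mem_preimage, ← lam_nat, ← Set.mem_preimage]
  have hstar : ∀ x : X, kcomp T f (kstar T f) x = ⨆ i, kcomp T f (kiter T f i) x := by
    intro x; exact hq f (fun n => kiter T f n) x
  ext x
  simp only [Set.mem_setOf_eq, Set.mem_union]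
  constructor
  · intro hx
    rw [kstar, hdia] at hx
    obtain ⟨n, hn⟩ := hx
    cases n with
    | zero => exact Or.inl ((lam_unit x U).mp hn)
    | succ n =>
      right
      have h1 : kcomp T f (kstar T f) x ∈ lam U := by
        rw [hstar x, hdia]; exact ⟨n, hn⟩
      exact (hcomp f (kstar T f) U x).mp h1
  · intro hx
    rw [kstar, hdia]
    cases hx with
    | inl h => exact ⟨0, (lam_unit x U).mpr h⟩
    | inr h =>
      have h1 : kcomp T f (kstar T f) x ∈ lam U := (hcomp f (kstar T f) U x).mpr h
      rw [hstar x, hdia] at h1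
      obtain ⟨n, hn⟩ := h1
      exact ⟨n + 1, hn⟩
end

section
/- Soundness of the star induction rule: let T be a left-quantalic monad and λ a diamond-like predicate lifting whose transpose is a monad morphism. Let f : X → TX and P, Q ⊆ X. If { x | f(x) ∈ λ_X(Q) } ∪ P ⊆ Q, then { x | f*(x) ∈ λ_X(P) } ⊆ Q. -/
/-- soundness of the star induction rule. For a left-quantalic
monad `T` and a diamond-like predicate lifting `λ` whose transpose is a monad
morphism, if `{x | f(x) ∈ λ_X(Q)} ∪ P ⊆ Q` then `{x | f*(x) ∈ λ_X(P)} ⊆ Q`. -/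
theorem stmt12 (T : SetMonad) [∀ X : Type, CompleteLattice (T.obj X)]
    (hq : LeftQuantalic T)
    (lam : {X : Type} → Set X → Set (T.obj X))
    (hdia : DiamondLike T lam)
    (lam_nat : ∀ {X Y : Type} (f : X → Y) (U : Set Y),
      lam (f ⁻¹' U) = (T.map f) ⁻¹' lam U)
    (lam_unit : ∀ {X : Type} (x : X) (U : Set X), T.unit x ∈ lam U ↔ x ∈ U)
    (lam_mult : ∀ {X : Type} (t : T.obj (T.obj X)) (U : Set X),
      T.mult t ∈ lam U ↔ t ∈ lam (lam U))
    {X : Type} (f : X → T.obj X) (P Q : Set X)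
    (h : {x : X | f x ∈ lam Q} ∪ P ⊆ Q) :
    {x : X | kstar T f x ∈ lam P} ⊆ Q := by
  -- characterization of Kleisli composition
  have hk : ∀ (g k : X → T.obj X) (x : X) (U : Set X),
      kcomp T g k x ∈ lam U ↔ g x ∈ lam (k ⁻¹' lam U) := by
    intro g k x U
    rw [kcomp, lam_mult, lam_nat]
    rfl
  -- monotonicity of lam
  have hmono : ∀ (U V : Set X), U ⊆ V → lam U ⊆ lam V := by
    intro U V hUV t ht
    by_cases hX : Nonempty X
    · obtain ⟨x0⟩ := hX
      set g' : X → T.obj X := fun y => ⨆ _ : PLift (y ∈ U), T.unit y with hg'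
      have hpre : ∀ (W : Set X), g' ⁻¹' lam W = U ∩ W := by
        intro W
        ext y
        simp only [Set.mem_preimage, hg', Set.mem_inter_iff]
        rw [hdia W (fun _ : PLift (y ∈ U) => T.unit y)]
        constructor
        · rintro ⟨⟨hy⟩, hw⟩; exact ⟨hy, (lam_unit y W).mp hw⟩
        · rintro ⟨hy, hw⟩; exact ⟨⟨hy⟩, (lam_unit y W).mpr hw⟩
      set s : T.obj X := T.mult (T.map g' t) with hs
      have hsV : s ∈ lam V := by
        have : s = kcomp T (fun _ => t) g' x0 := rfl
        rw [this, hk]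
        rw [hpre, Set.inter_eq_left.mpr hUV]
        exact ht
      -- t ⊔ s = t
      have hgle : (fun y => ⨆ b : Bool, (if b then T.unit y else g' y)) = T.unit := by
        funext y
        rw [iSup_bool_eq]
        simp only [if_true, if_false]
        refine sup_eq_left.mpr ?_
        exact iSup_le (fun _ => le_refl _)
      have hts : t = t ⊔ s := by
        have h1 := hq (fun _ : X => t) (fun b : Bool => fun y => if b then T.unit y else g' y) x0
        rw [show (fun y => ⨆ b : Bool, (fun b : Bool => fun y => if b then T.unit y else g' y) b y)
              = T.unit from hgle] at h1
        have h2 : kcomp T (fun _ : X => t) T.unit x0 = t := T.mult_map_unit t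
        rw [h2, iSup_bool_eq] at h1
        simp only [reduceIte, Bool.false_eq_true, if_false] at h1
        have e1 : kcomp T (fun _ : X => t) (fun y => T.unit y) x0 = t := T.mult_map_unit t
        have e2 : kcomp T (fun _ : X => t) (fun y => g' y) x0 = s := rfl
        rw [e1, e2] at h1
        exact h1
      have : (⨆ b : Bool, (if b then t else s)) ∈ lam V := by
        rw [hdia]
        exact ⟨false, by simpa using hsV⟩
      rw [iSup_bool_eq] at this
      simp only [reduceIte, Bool.false_eq_true, if_false] at this
      rwa [← hts] at this
    · have : U = V := by
        ext y; exact absurd ⟨y⟩ hX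
      rwa [← this]
  -- main induction
  have hind : ∀ (n : ℕ) (x : X), kiter T f n x ∈ lam P → x ∈ Q := by
    intro n
    induction n with
    | zero => intro x hx; exact h (Or.inr ((lam_unit x P).mp hx))
    | succ n ih =>
      intro x hx
      rw [kiter, hk] at hx
      have : lam ((kiter T f n) ⁻¹' lam P) ⊆ lam Q := hmono _ _ (fun y hy => ih y hy)
      exact h (Or.inl (this hx))
  intro x hx
  rw [Set.mem_setOf_eq, kstar, hdia] at hx
  obtain ⟨n, hn⟩ := hx
  exact hind n x hn
end

section
/- Let T be left-quantalic, λ diamond-like with monad-morphism transpose, g : S → TS, X ⊆ S, and let Z be the least fixed point of the monotone operator F(Y) = { Δ ∈ S | g(Δ) ∈ λ_S(Y) } ∪ X on Pow(S). Then Z ⊆ { Δ ∈ S | g*(Δ) ∈ λ_S(X) }. -/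
/-! The least fixed point lies below every prefixed point, so it suffices that
`Y₀ = {Δ | g*(Δ) ∈ λ(X)}` is prefixed. Points of `X` lie in `Y₀` via the iterate `g⁽⁰⁾ = η`.
If `g(Δ) ∈ λ(Y₀)`, the monad-morphism laws give `(g ∘_Kl g*)(Δ) ∈ λ(X)`; left-quantalicity
rewrites `g ∘_Kl g*` as `⋁ₙ g⁽ⁿ⁺¹⁾`, and diamond-likeness picks out one iterate. -/

section KleisliStar

variable {T : SetMonad} {lam : {X : Type} → Set X → Set (T.obj X)}

theorem kcomp_mem_lam_iff
    (lam_nat : ∀ {X Y : Type} (f : X → Y) (U : Set Y),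
      lam (f ⁻¹' U) = (T.map f) ⁻¹' lam U)
    (lam_mult : ∀ {X : Type} (t : T.obj (T.obj X)) (U : Set X),
      T.mult t ∈ lam U ↔ t ∈ lam (lam U))
    {S : Type} (f h : S → T.obj S) (U : Set S) (x : S) :
    kcomp T f h x ∈ lam U ↔ f x ∈ lam (h ⁻¹' lam U) := by
  rw [kcomp, lam_mult, lam_nat, Set.mem_preimage]

variable [∀ X : Type, CompleteLattice (T.obj X)]

theorem kstar_mem_lam_iff (hdia : DiamondLike T lam) {S : Type} (g : S → T.obj S)
    (U : Set S) (x : S) : kstar T g x ∈ lam U ↔ ∃ n, kiter T g n x ∈ lam U :=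
  hdia U fun n => kiter T g n x

theorem kcomp_kstar_eq_iSup_kiter_succ (hq : LeftQuantalic T) {S : Type}
    (g : S → T.obj S) (x : S) : kcomp T g (kstar T g) x = ⨆ n, kiter T g (n + 1) x :=
  hq g (fun n => kiter T g n) x

theorem kstar_preimage_lam_prefixed (hq : LeftQuantalic T) (hdia : DiamondLike T lam)
    (lam_nat : ∀ {X Y : Type} (f : X → Y) (U : Set Y),
      lam (f ⁻¹' U) = (T.map f) ⁻¹' lam U)
    (lam_unit : ∀ {X : Type} (x : X) (U : Set X), T.unit x ∈ lam U ↔ x ∈ U)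
    (lam_mult : ∀ {X : Type} (t : T.obj (T.obj X)) (U : Set X),
      T.mult t ∈ lam U ↔ t ∈ lam (lam U))
    {S : Type} (g : S → T.obj S) (U : Set S) :
    {x : S | g x ∈ lam (kstar T g ⁻¹' lam U)} ∪ U ⊆ kstar T g ⁻¹' lam U := by
  rintro x (hstep | hbase)
  · have hcomp : kcomp T g (kstar T g) x ∈ lam U :=
      (kcomp_mem_lam_iff lam_nat lam_mult g (kstar T g) U x).mpr hstep
    rw [kcomp_kstar_eq_iSup_kiter_succ hq, hdia] at hcomp
    obtain ⟨n, hn⟩ := hcomp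
    exact (kstar_mem_lam_iff hdia g U x).mpr ⟨n + 1, hn⟩
  · exact (kstar_mem_lam_iff hdia g U x).mpr ⟨0, (lam_unit x U).mpr hbase⟩

end KleisliStar

/-- let `T` be left-quantalic, `λ` diamond-like with monad-morphism
transpose, `g : S → TS`, `X ⊆ S`, and let `Z` be the least fixed point (given by
Knaster–Tarski as the intersection of all prefixed points) of the operator
`F(Y) = {Δ | g(Δ) ∈ λ_S(Y)} ∪ X`. Then `Z ⊆ {Δ | g*(Δ) ∈ λ_S(X)}`. -/
theorem stmt18 (T : SetMonad) [∀ X : Type, CompleteLattice (T.obj X)]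
    (hq : LeftQuantalic T)
    (lam : {X : Type} → Set X → Set (T.obj X))
    (hdia : DiamondLike T lam)
    (lam_nat : ∀ {X Y : Type} (f : X → Y) (U : Set Y),
      lam (f ⁻¹' U) = (T.map f) ⁻¹' lam U)
    (lam_unit : ∀ {X : Type} (x : X) (U : Set X), T.unit x ∈ lam U ↔ x ∈ U)
    (lam_mult : ∀ {X : Type} (t : T.obj (T.obj X)) (U : Set X),
      T.mult t ∈ lam U ↔ t ∈ lam (lam U))
    {S : Type} (g : S → T.obj S) (Xc : Set S) :
    ⋂₀ {Y : Set S | {Δ : S | g Δ ∈ lam Y} ∪ Xc ⊆ Y}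
      ⊆ {Δ : S | kstar T g Δ ∈ lam Xc} :=
  Set.sInter_subset_of_mem
    (kstar_preimage_lam_prefixed hq hdia lam_nat lam_unit lam_mult g Xc)
end

section
/- Let T be left-quantalic with λ diamond-like, monotone, and with monad-morphism transpose. For g : S → TS and U ⊆ S, the set { Δ | g*(Δ) ∈ λ_S(U) } is the least subset Q of S satisfying U ⊆ Q and { Δ | g(Δ) ∈ λ_S(Q) } ⊆ Q; i.e., the diamond of the Kleisli star computes the least fixed point μQ.(U ∪ ⟨g⟩Q). -/
/-- let `T` be left-quantalic and `λ` diamond-like, monotone, with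
monad-morphism transpose. For `g : S → TS` and `U ⊆ S`, the set
`D = {Δ | g*(Δ) ∈ λ_S(U)}` is the least subset `Q` of `S` with `U ⊆ Q` and
`{Δ | g(Δ) ∈ λ_S(Q)} ⊆ Q`; i.e. the diamond of the Kleisli star computes the
least fixed point `μQ.(U ∪ ⟨g⟩Q)`. -/
theorem stmt19 (T : SetMonad) [∀ X : Type, CompleteLattice (T.obj X)]
    (hq : LeftQuantalic T)
    (lam : {X : Type} → Set X → Set (T.obj X))
    (hdia : DiamondLike T lam)
    (hmono : ∀ {X : Type} (U V : Set X), U ⊆ V → lam U ⊆ lam V)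
    (lam_nat : ∀ {X Y : Type} (f : X → Y) (U : Set Y),
      lam (f ⁻¹' U) = (T.map f) ⁻¹' lam U)
    (lam_unit : ∀ {X : Type} (x : X) (U : Set X), T.unit x ∈ lam U ↔ x ∈ U)
    (lam_mult : ∀ {X : Type} (t : T.obj (T.obj X)) (U : Set X),
      T.mult t ∈ lam U ↔ t ∈ lam (lam U))
    {S : Type} (g : S → T.obj S) (U : Set S) :
    (U ⊆ {Δ : S | kstar T g Δ ∈ lam U} ∧
      {Δ : S | g Δ ∈ lam {Δ' : S | kstar T g Δ' ∈ lam U}}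
        ⊆ {Δ : S | kstar T g Δ ∈ lam U}) ∧
    (∀ Q : Set S, U ⊆ Q → {Δ : S | g Δ ∈ lam Q} ⊆ Q →
      {Δ : S | kstar T g Δ ∈ lam U} ⊆ Q) := by
  -- key unfolding lemma
  have key : ∀ (f h : S → T.obj S) (V : Set S) (Δ : S),
      kcomp T f h Δ ∈ lam V ↔ f Δ ∈ lam {Δ' : S | h Δ' ∈ lam V} := by
    intro f h V Δ
    have hnat := lam_nat h (lam V)
    have : {Δ' : S | h Δ' ∈ lam V} = h ⁻¹' lam V := rfl
    rw [kcomp, lam_mult, this, hnat]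
    exact Iff.rfl
  have star_iff : ∀ (V : Set S) (Δ : S),
      kstar T g Δ ∈ lam V ↔ ∃ n, kiter T g n Δ ∈ lam V := by
    intro V Δ; exact hdia V (fun n => kiter T g n Δ)
  refine ⟨⟨?_, ?_⟩, ?_⟩
  · intro Δ hΔ
    exact (star_iff U Δ).mpr ⟨0, (lam_unit Δ U).mpr hΔ⟩
  · intro Δ hΔ
    have h1 : kcomp T g (kstar T g) Δ ∈ lam U := (key g (kstar T g) U Δ).mpr hΔ
    have h2 : kcomp T g (kstar T g) Δ = ⨆ n, kcomp T g (kiter T g n) Δ :=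
      hq g (kiter T g) Δ
    rw [h2] at h1
    obtain ⟨n, hn⟩ := (hdia U (fun n => kcomp T g (kiter T g n) Δ)).mp h1
    exact (star_iff U Δ).mpr ⟨n + 1, hn⟩
  · intro Q hUQ hstep Δ hΔ
    obtain ⟨n, hn⟩ := (star_iff U Δ).mp hΔ
    induction n generalizing Δ with
    | zero => exact hUQ ((lam_unit Δ U).mp hn)
    | succ n ih =>
      have h1 : g Δ ∈ lam {Δ' : S | kiter T g n Δ' ∈ lam U} :=
        (key g (kiter T g n) U Δ).mp hn
      exact hstep (hmono _ Q (fun Δ' hΔ' => ih ((star_iff U Δ').mpr ⟨n, hΔ'⟩) hΔ') h1)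
end
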